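/- arXiv:1511.07290 — 4 statements merged into one kernel-verified Lean document; each statement's English description precedes it below -/
import Mathlib

section
/- Let α ∈ Q_{−1}(2k) have Frobenius coordinates (a_1,...,a_u; a_1+1,...,a_u+1) and β ∈ Q_{−1}(2(k−1)) have Frobenius coordinates (b_1,...,b_v; b_1+1,...,b_v+1). Then β ⊆ α and the skew diagram α/β does not consist of two horizontally adjacent boxes if and only if either (u = v and there is an index t with a_i = b_i for all i ≠ t and a_t = b_t + 1), or (u = v + 1, a_i = b_i for 1 ≤ i ≤ v, and a_u = 1). -/
/-!
A diagram `μ` in `Q₋₁` is the disjoint union of the hooks `{i} × [i, i + aᵢ) ∪ (i, i + aᵢ] × {i}`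
of its diagonal boxes, where `aᵢ = aSeq μ i` (which vanishes past the diagonal). Hence
`|μ| = 2 ∑ aᵢ`, and `β ⊆ α` holds exactly when `aSeq β ≤ aSeq α` pointwise. If `β ⊆ α` and
`|α| = |β| + 2`, the `a`-sequences therefore differ in a single entry, by one. Conversely, raising
the entry `t` by one adds the box at the end of the arm and the box at the end of the leg of the
`t`-th hook, and these lie in different rows. Raising the first entry past the diagonal of `β`
creates a new diagonal box with `a = 1`.
-/

/-- A Young diagram is in `Q₋₁` (of its size) if for every diagonal box `(i,i)`
the leg length exceeds the arm length by exactly one. -/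
def IsQneg1 (μ : YoungDiagram) : Prop :=
  ∀ i : ℕ, (i, i) ∈ μ → μ.colLen i = μ.rowLen i + 1

/-- The number `u` of diagonal boxes of a Young diagram. -/
def diagCard (μ : YoungDiagram) : ℕ :=
  ((Finset.range μ.card).filter (fun i => (i, i) ∈ μ)).card

/-- The Frobenius `a`-sequence: `aᵢ` is the arm length of the diagonal box `(i,i)`
plus one (rows and the sequence indexed from `0`). -/
def aSeq (μ : YoungDiagram) (i : ℕ) : ℕ := μ.rowLen i - i

open Finset YoungDiagram

theorem Finset.exists_eq_add_one_of_sum_eq_sum_add_one {ι : Type*} {s : Finset ι} {f g : ι → ℕ}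
    (hfg : ∀ i ∈ s, f i ≤ g i) (hsum : ∑ i ∈ s, g i = ∑ i ∈ s, f i + 1) :
    ∃ t ∈ s, g t = f t + 1 ∧ ∀ i ∈ s, i ≠ t → g i = f i := by
  have hdiff : ∑ i ∈ s, (g i - f i) = 1 := by rw [sum_tsub_distrib s hfg]; omega
  obtain ⟨t, ht, hne⟩ := exists_ne_zero_of_sum_ne_zero (hdiff.trans_ne one_ne_zero)
  have hle := sum_le_one_iff.1 hdiff.le
  refine ⟨t, ht, ?_, fun i hi hit => ?_⟩
  · have := (hle t t ht ht hne hne).2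
    have := hfg t ht
    omega
  · by_contra h
    have := hfg i hi
    exact hit (hle i t hi ht (by omega) hne).1

theorem YoungDiagram.rowLen_mono {β α : YoungDiagram} (h : β ≤ α) (i : ℕ) :
    β.rowLen i ≤ α.rowLen i := by
  by_contra! hlt
  exact (mem_iff_lt_rowLen.1 (h (mem_iff_lt_rowLen.2 hlt))).false

theorem lt_card_of_diag_mem {μ : YoungDiagram} {i : ℕ} (h : (i, i) ∈ μ) : i < μ.card :=
  calc i < μ.rowLen i := mem_iff_lt_rowLen.1 h
    _ = #(μ.row i) := μ.rowLen_eq_card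
    _ ≤ μ.card := card_filter_le _ _

theorem diag_mem_iff_lt_diagCard (μ : YoungDiagram) (i : ℕ) : (i, i) ∈ μ ↔ i < diagCard μ := by
  set S := (range μ.card).filter fun i => (i, i) ∈ μ
  have hS : ∀ j, j ∈ S ↔ (j, j) ∈ μ := fun j => by
    simpa [S] using lt_card_of_diag_mem
  change _ ↔ i < #S
  constructor
  · intro h
    have hsub : range (i + 1) ⊆ S := fun j hj => by
      have hji : j ≤ i := Nat.lt_succ_iff.1 (mem_range.1 hj)
      exact (hS j).2 (μ.up_left_mem hji hji h)
    simpa using card_le_card hsub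
  · intro hi
    by_contra h
    have hsub : S ⊆ range i := fun j hj =>
      mem_range.2 (lt_of_not_ge fun hij => h (μ.up_left_mem hij hij ((hS j).1 hj)))
    exact (card_range i ▸ card_le_card hsub).not_gt hi

theorem aSeq_pos_iff (μ : YoungDiagram) (i : ℕ) : 0 < aSeq μ i ↔ i < diagCard μ := by
  rw [← diag_mem_iff_lt_diagCard, mem_iff_lt_rowLen, aSeq, Nat.sub_pos_iff_lt]

theorem aSeq_mono {β α : YoungDiagram} (h : β ≤ α) (i : ℕ) : aSeq β i ≤ aSeq α i :=
  Nat.sub_le_sub_right (rowLen_mono h i) i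

theorem diagCard_mono {β α : YoungDiagram} (h : β ≤ α) : diagCard β ≤ diagCard α := by
  by_contra! hlt
  rw [← diag_mem_iff_lt_diagCard] at hlt
  exact lt_irrefl _ ((diag_mem_iff_lt_diagCard α _).1 (h hlt))

theorem IsQneg1.mem_iff {μ : YoungDiagram} (hQ : IsQneg1 μ) (i j : ℕ) :
    (i, j) ∈ μ ↔ (i ≤ j ∧ j < i + aSeq μ i) ∨ (j < i ∧ i ≤ j + aSeq μ j) := by
  rcases le_or_gt i j with hij | hji
  · rw [mem_iff_lt_rowLen]
    unfold aSeq
    omega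
  · by_cases hd : (j, j) ∈ μ
    · have := mem_iff_lt_rowLen.1 hd
      rw [mem_iff_lt_colLen, hQ j hd]
      unfold aSeq
      omega
    · have hnot : (i, j) ∉ μ := fun h => hd (μ.up_left_mem hji.le le_rfl h)
      rw [diag_mem_iff_lt_diagCard, ← aSeq_pos_iff] at hd
      simp only [hnot, false_iff]
      omega

theorem IsQneg1.le_of_forall_aSeq_le {α β : YoungDiagram} (hα : IsQneg1 α) (hβ : IsQneg1 β)
    (h : ∀ i, aSeq β i ≤ aSeq α i) : β ≤ α := by
  rintro ⟨i, j⟩ hc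
  rw [hβ.mem_iff] at hc
  rw [hα.mem_iff]
  have := h i
  have := h j
  omega

/-- The hook of the diagonal box `(i, i)` with arm length `a - 1` and leg length `a`. -/
def hookCells (i a : ℕ) : Finset (ℕ × ℕ) :=
  {i} ×ˢ Ico i (i + a) ∪ Ioc i (i + a) ×ˢ {i}

theorem card_hookCells (i a : ℕ) : #(hookCells i a) = 2 * a := by
  rw [hookCells, card_union_of_disjoint, card_product, card_product]
  · simp only [card_singleton, Nat.card_Ico, Nat.card_Ioc]
    omega
  · simp only [disjoint_left, mem_product, mem_singleton, mem_Ico, mem_Ioc]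
    omega

theorem IsQneg1.cells_eq_biUnion {μ : YoungDiagram} (hQ : IsQneg1 μ) {N : ℕ}
    (hN : diagCard μ ≤ N) : μ.cells = (range N).biUnion fun t => hookCells t (aSeq μ t) := by
  ext ⟨i, j⟩
  simp only [mem_cells, hQ.mem_iff, mem_biUnion, mem_range, hookCells, mem_union, mem_product,
    mem_singleton, mem_Ico, mem_Ioc]
  constructor
  · rintro (⟨hij, hj⟩ | ⟨hji, hi⟩)
    · exact ⟨i, ((aSeq_pos_iff μ i).1 (by omega)).trans_le hN, Or.inl ⟨rfl, hij, hj⟩⟩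
    · exact ⟨j, ((aSeq_pos_iff μ j).1 (by omega)).trans_le hN, Or.inr ⟨⟨hji, hi⟩, rfl⟩⟩
  · rintro ⟨t, -, ⟨rfl, h⟩ | ⟨h, rfl⟩⟩ <;> omega

theorem IsQneg1.card_eq {μ : YoungDiagram} (hQ : IsQneg1 μ) {N : ℕ} (hN : diagCard μ ≤ N) :
    μ.card = 2 * ∑ i ∈ range N, aSeq μ i := by
  rw [YoungDiagram.card, hQ.cells_eq_biUnion hN, card_biUnion, mul_sum]
  · simp only [card_hookCells]
  · intro s _ t _ hst
    simp only [hookCells, disjoint_left, mem_union, mem_product, mem_singleton, mem_Ico, mem_Ioc]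
    omega

theorem IsQneg1.exists_aSeq_eq_add_one_of_le {α β : YoungDiagram} (hα : IsQneg1 α)
    (hβ : IsQneg1 β) (hle : β ≤ α) (hcard : α.card = β.card + 2) :
    ∃ t, aSeq α t = aSeq β t + 1 ∧ ∀ i ≠ t, aSeq α i = aSeq β i := by
  have hsum : ∑ i ∈ range (diagCard α), aSeq α i = ∑ i ∈ range (diagCard α), aSeq β i + 1 := by
    have := hα.card_eq le_rfl
    have := hβ.card_eq (diagCard_mono hle)
    omega
  obtain ⟨t, -, hsucc, hrest⟩ :=
    exists_eq_add_one_of_sum_eq_sum_add_one (fun i _ => aSeq_mono hle i) hsum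
  refine ⟨t, hsucc, fun i hi => ?_⟩
  by_cases hiN : i < diagCard α
  · exact hrest i (mem_range.2 hiN) hi
  · have := aSeq_pos_iff α i
    have := aSeq_pos_iff β i
    have := diagCard_mono hle
    omega

theorem IsQneg1.not_exists_sdiff_eq_horizontal_pair {α β : YoungDiagram} (hα : IsQneg1 α)
    (hβ : IsQneg1 β) {t : ℕ} (ht : aSeq β t < aSeq α t) :
    ¬ ∃ i j : ℕ, α.cells \ β.cells = {(i, j), (i, j + 1)} := by
  rintro ⟨i, j, hij⟩
  have harm : (t, t + aSeq β t) ∈ α.cells \ β.cells := by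
    simp only [mem_sdiff, mem_cells, hα.mem_iff, hβ.mem_iff]
    omega
  have hleg : (t + aSeq β t + 1, t) ∈ α.cells \ β.cells := by
    simp only [mem_sdiff, mem_cells, hα.mem_iff, hβ.mem_iff]
    omega
  rw [hij] at harm hleg
  simp only [mem_insert, mem_singleton, Prod.mk.injEq] at harm hleg
  omega

theorem exists_aSeq_eq_add_one_iff (α β : YoungDiagram) :
    (∃ t, aSeq α t = aSeq β t + 1 ∧ ∀ i ≠ t, aSeq α i = aSeq β i) ↔
    ((diagCard α = diagCard β ∧ ∃ t < diagCard α,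
        aSeq α t = aSeq β t + 1 ∧ ∀ i < diagCard α, i ≠ t → aSeq α i = aSeq β i) ∨
     (diagCard α = diagCard β + 1 ∧ (∀ i < diagCard β, aSeq α i = aSeq β i) ∧
        aSeq α (diagCard β) = 1)) := by
  have hα := aSeq_pos_iff α
  have hβ := aSeq_pos_iff β
  constructor
  · rintro ⟨t, hsucc, hrest⟩
    have hdiag : ∀ i ≠ t, (i < diagCard α ↔ i < diagCard β) := fun i hi => by
      rw [← hα, ← hβ, hrest i hi]
    have := hdiag (diagCard α)
    have := hdiag (diagCard β)
    have := hdiag (diagCard β + 1)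
    have := hα t
    have := hβ t
    by_cases ht : t < diagCard β
    · exact Or.inl ⟨by omega, t, by omega, hsucc, fun i _ hi => hrest i hi⟩
    · have htv : t = diagCard β := by omega
      subst htv
      exact Or.inr ⟨by omega, fun i hi => hrest i hi.ne, by omega⟩
  · rintro (⟨huv, t, -, hsucc, hrest⟩ | ⟨huv, hrest, hone⟩)
    · refine ⟨t, hsucc, fun i hi => ?_⟩
      by_cases hiu : i < diagCard α
      · exact hrest i hiu hi
      · have := hα i
        have := hβ i
        omega
    · refine ⟨diagCard β, by have := hβ (diagCard β); omega, fun i hi => ?_⟩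
      by_cases hiv : i < diagCard β
      · exact hrest i hiv
      · have := hα i
        have := hβ i
        omega

/-- for `α ∈ Q₋₁(2k)` and `β ∈ Q₋₁(2(k-1))`, one has `β ⊆ α` with the
two boxes of `α/β` not horizontally adjacent if and only if, in Frobenius
coordinates, either the `a`-sequences agree except one entry increases by `1`,
or the `a`-sequence of `α` is that of `β` with an extra final entry `1`. -/
theorem stmt3 (k : ℕ) (hk : 1 ≤ k) (α β : YoungDiagram)
    (hQα : IsQneg1 α) (hQβ : IsQneg1 β)
    (hα : α.card = 2 * k) (hβ : β.card = 2 * (k - 1)) :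
    (β ≤ α ∧ ¬ ∃ i j : ℕ, α.cells \ β.cells = {(i, j), (i, j + 1)}) ↔
    ((diagCard α = diagCard β ∧ ∃ t < diagCard α,
        aSeq α t = aSeq β t + 1 ∧ ∀ i < diagCard α, i ≠ t → aSeq α i = aSeq β i) ∨
     (diagCard α = diagCard β + 1 ∧ (∀ i < diagCard β, aSeq α i = aSeq β i) ∧
        aSeq α (diagCard β) = 1)) := by
  rw [← exists_aSeq_eq_add_one_iff]
  constructor
  · rintro ⟨hle, -⟩
    exact hQα.exists_aSeq_eq_add_one_of_le hQβ hle (by omega)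
  · rintro ⟨t, hsucc, hrest⟩
    have hle : ∀ i, aSeq β i ≤ aSeq α i := fun i => by
      rcases eq_or_ne i t with rfl | hi
      · omega
      · exact (hrest i hi).ge
    exact ⟨hQα.le_of_forall_aSeq_le hQβ hle,
      hQα.not_exists_sdiff_eq_horizontal_pair hQβ (t := t) (by omega)⟩
end

section
/- Let α ∈ Q_{−1}(2k) and σ ∈ Q_{−1}(2(k−2)), each with at most r/2 parts. Then the set of partitions τ ∈ Q_{−1}(2(k−1)) with σ ⊂₂ τ ⊂₂ α contains at most two elements. -/
/-- `β ⊂₂ α` : `β ⊆ α` and the two boxes of `α/β` are not horizontally adjacent. -/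
def Sub2 (β α : YoungDiagram) : Prop :=
  β ≤ α ∧ ¬ ∃ i j : ℕ, α.cells \ β.cells = {(i, j), (i, j + 1)}

/-- The two boxes added to the `i`-th diagonal hook when its arm and leg both grow by one. -/
def hookPair (i c : ℕ) : Finset (ℕ × ℕ) := {(i, c), (c + 1, i)}

lemma card_hookPair {i c : ℕ} (h : i ≤ c) : (hookPair i c).card = 2 :=
  Finset.card_pair (by simp; omega)

lemma eq_of_mem_hookPair {i c i' c' : ℕ} (h : i ≤ c) (h' : i' ≤ c')
    (hmem : (i, c) ∈ hookPair i' c') : hookPair i c = hookPair i' c' := by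
  simp only [hookPair, Finset.mem_insert, Finset.mem_singleton, Prod.mk.injEq] at hmem
  rcases hmem with ⟨rfl, rfl⟩ | ⟨rfl, rfl⟩
  · rfl
  · omega

lemma YoungDiagram.eq_of_sdiff_eq {σ τ τ' : YoungDiagram} (h : σ ≤ τ) (h' : σ ≤ τ')
    (hd : τ.cells \ σ.cells = τ'.cells \ σ.cells) : τ = τ' := by
  apply YoungDiagram.ext
  rw [← Finset.union_sdiff_of_subset (YoungDiagram.cells_subset_iff.2 h),
    ← Finset.union_sdiff_of_subset (YoungDiagram.cells_subset_iff.2 h'), hd]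

namespace IsQneg1

open YoungDiagram

variable {β γ : YoungDiagram}

/-- A box of `γ` outside `β` makes the diagonal hook through it strictly longer in `γ`. -/
lemma exists_rowLen_sub_lt (hβ : IsQneg1 β) (hγ : IsQneg1 γ) {a b : ℕ}
    (hγab : (a, b) ∈ γ) (hβab : (a, b) ∉ β) :
    ∃ i, β.rowLen i - i < γ.rowLen i - i := by
  rcases le_or_gt a b with hab | hba
  · have hγrow := mem_iff_lt_rowLen.1 hγab
    have hβrow := mem_iff_lt_rowLen.not.1 hβab
    exact ⟨a, by omega⟩
  -- Below the diagonal the box extends the leg, and `Q₋₁` turns leg length into arm length.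
  have hγbb : (b, b) ∈ γ := γ.up_left_mem hba.le le_rfl hγab
  have hγcol := hγ b hγbb
  have hγbb' := mem_iff_lt_rowLen.1 hγbb
  have hγleg := mem_iff_lt_colLen.1 hγab
  have hβleg := mem_iff_lt_colLen.not.1 hβab
  refine ⟨b, ?_⟩
  by_cases hβbb : (b, b) ∈ β
  · have hβcol := hβ b hβbb
    have hβbb' := mem_iff_lt_rowLen.1 hβbb
    omega
  · have hβbb' := mem_iff_lt_rowLen.not.1 hβbb
    omega

lemma hookPair_subset_sdiff (hβ : IsQneg1 β) (hγ : IsQneg1 γ) {i : ℕ}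
    (hi : β.rowLen i - i < γ.rowLen i - i) :
    hookPair i (max i (β.rowLen i)) ⊆ γ.cells \ β.cells := by
  set c := max i (β.rowLen i)
  have hγic : (i, c) ∈ γ := mem_iff_lt_rowLen.2 (by omega)
  have hβic : (i, c) ∉ β := fun h => (mem_iff_lt_rowLen.1 h).not_ge (by omega)
  have hγcol : γ.colLen i = γ.rowLen i + 1 :=
    hγ i (mem_iff_lt_rowLen.2 (by omega))
  have hγleg : (c + 1, i) ∈ γ := mem_iff_lt_colLen.2 (by omega)
  have hβleg : (c + 1, i) ∉ β := by
    intro h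
    have hβcol := hβ i (β.up_left_mem (by omega) le_rfl h)
    exact (mem_iff_lt_colLen.1 h).not_ge (by omega)
  simp only [hookPair, Finset.insert_subset_iff, Finset.singleton_subset_iff, Finset.mem_sdiff,
    YoungDiagram.mem_cells]
  exact ⟨⟨hγic, hβic⟩, hγleg, hβleg⟩

lemma exists_sdiff_eq_hookPair (hβ : IsQneg1 β) (hγ : IsQneg1 γ) (hle : β ≤ γ)
    (hcard : γ.card = β.card + 2) :
    ∃ i c, i ≤ c ∧ γ.cells \ β.cells = hookPair i c := by
  have hsub := YoungDiagram.cells_subset_iff.2 hle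
  have hskew : (γ.cells \ β.cells).card = 2 := by
    rw [Finset.card_sdiff_of_subset hsub]
    exact Nat.sub_eq_of_eq_add' hcard
  obtain ⟨⟨a, b⟩, hab⟩ := Finset.card_pos.1 (by omega : 0 < (γ.cells \ β.cells).card)
  rw [Finset.mem_sdiff, mem_cells, mem_cells] at hab
  obtain ⟨i, hi⟩ := exists_rowLen_sub_lt hβ hγ hab.1 hab.2
  have hic : i ≤ max i (β.rowLen i) := le_max_left _ _
  refine ⟨i, _, hic, (Finset.eq_of_subset_of_card_le (hookPair_subset_sdiff hβ hγ hi) ?_).symm⟩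
  rw [hskew, card_hookPair hic]

end IsQneg1

lemma eq_or_sdiff_eq_of_hookPair {σ τ₁ τ α : YoungDiagram}
    (hστ₁ : σ ≤ τ₁) (hστ : σ ≤ τ) (hτα : τ ≤ α)
    {i₁ c₁ i₁' c₁' i c : ℕ} (h₁ : i₁ ≤ c₁) (h₁' : i₁' ≤ c₁') (h : i ≤ c)
    (e₁ : τ₁.cells \ σ.cells = hookPair i₁ c₁)
    (e₁' : α.cells \ τ₁.cells = hookPair i₁' c₁')
    (e : τ.cells \ σ.cells = hookPair i c) :
    τ = τ₁ ∨ τ.cells \ σ.cells = α.cells \ τ₁.cells := by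
  have hu : (i, c) ∈ τ.cells \ σ.cells := by rw [e]; exact Finset.mem_insert_self _ _
  rw [Finset.mem_sdiff] at hu
  by_cases hτ₁ : (i, c) ∈ τ₁.cells
  · have hmem : (i, c) ∈ τ₁.cells \ σ.cells := Finset.mem_sdiff.2 ⟨hτ₁, hu.2⟩
    rw [e₁] at hmem
    left
    exact YoungDiagram.eq_of_sdiff_eq hστ hστ₁ (by rw [e, e₁, eq_of_mem_hookPair h h₁ hmem])
  · have hα : (i, c) ∈ α.cells := YoungDiagram.cells_subset_iff.2 hτα hu.1
    have hmem : (i, c) ∈ α.cells \ τ₁.cells := Finset.mem_sdiff.2 ⟨hα, hτ₁⟩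
    rw [e₁'] at hmem
    right
    rw [e, e₁', eq_of_mem_hookPair h h₁' hmem]

theorem stmt4_general (k : ℕ) (hk : 2 ≤ k) (α σ : YoungDiagram)
    (hQα : IsQneg1 α) (hQσ : IsQneg1 σ)
    (hα : α.card = 2 * k) (hσ : σ.card = 2 * (k - 2)) :
    ∀ τ₁ τ₂ τ₃ : YoungDiagram,
      (IsQneg1 τ₁ ∧ τ₁.card = 2 * (k - 1) ∧ Sub2 σ τ₁ ∧ Sub2 τ₁ α) →
      (IsQneg1 τ₂ ∧ τ₂.card = 2 * (k - 1) ∧ Sub2 σ τ₂ ∧ Sub2 τ₂ α) →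
      (IsQneg1 τ₃ ∧ τ₃.card = 2 * (k - 1) ∧ Sub2 σ τ₃ ∧ Sub2 τ₃ α) →
      τ₁ = τ₂ ∨ τ₁ = τ₃ ∨ τ₂ = τ₃ := by
  rintro τ₁ τ₂ τ₃ ⟨hQ₁, hc₁, ⟨hσ₁, -⟩, ⟨hα₁, -⟩⟩ ⟨hQ₂, hc₂, ⟨hσ₂, -⟩, ⟨hα₂, -⟩⟩
    ⟨hQ₃, hc₃, ⟨hσ₃, -⟩, ⟨hα₃, -⟩⟩
  obtain ⟨i₁, c₁, h₁, e₁⟩ := hQσ.exists_sdiff_eq_hookPair hQ₁ hσ₁ (by omega)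
  obtain ⟨i₁', c₁', h₁', e₁'⟩ := hQ₁.exists_sdiff_eq_hookPair hQα hα₁ (by omega)
  obtain ⟨i₂, c₂, h₂, e₂⟩ := hQσ.exists_sdiff_eq_hookPair hQ₂ hσ₂ (by omega)
  obtain ⟨i₃, c₃, h₃, e₃⟩ := hQσ.exists_sdiff_eq_hookPair hQ₃ hσ₃ (by omega)
  rcases eq_or_sdiff_eq_of_hookPair hσ₁ hσ₂ hα₂ h₁ h₁' h₂ e₁ e₁' e₂ with h12 | h12
  · exact Or.inl h12.symm
  rcases eq_or_sdiff_eq_of_hookPair hσ₁ hσ₃ hα₃ h₁ h₁' h₃ e₁ e₁' e₃ with h13 | h13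
  · exact Or.inr (Or.inl h13.symm)
  exact Or.inr (Or.inr (YoungDiagram.eq_of_sdiff_eq hσ₂ hσ₃ (h12.trans h13.symm)))

/-- for `α ∈ Q₋₁(2k)` and `σ ∈ Q₋₁(2(k-2))`, each with at most `r/2`
parts, the set of `τ ∈ Q₋₁(2(k-1))` with `σ ⊂₂ τ ⊂₂ α` has at most two elements. -/
theorem stmt4 (r k : ℕ) (hk : 2 ≤ k) (α σ : YoungDiagram)
    (hQα : IsQneg1 α) (hQσ : IsQneg1 σ)
    (hα : α.card = 2 * k) (hσ : σ.card = 2 * (k - 2))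
    (hαl : α.colLen 0 ≤ r / 2) (hσl : σ.colLen 0 ≤ r / 2) :
    ∀ τ₁ τ₂ τ₃ : YoungDiagram,
      (IsQneg1 τ₁ ∧ τ₁.card = 2 * (k - 1) ∧ Sub2 σ τ₁ ∧ Sub2 τ₁ α) →
      (IsQneg1 τ₂ ∧ τ₂.card = 2 * (k - 1) ∧ Sub2 σ τ₂ ∧ Sub2 τ₂ α) →
      (IsQneg1 τ₃ ∧ τ₃.card = 2 * (k - 1) ∧ Sub2 σ τ₃ ∧ Sub2 τ₃ α) →
      τ₁ = τ₂ ∨ τ₁ = τ₃ ∨ τ₂ = τ₃ :=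
  stmt4_general k hk α σ hQα hQσ hα hσ
end

section
/- Let r be even and λ a partition with l(λ) ≤ r and i_r(λ) < ∞. Then τ_r(λ)_1 = λ_1 and τ_r(λ)_2 = λ_2; i.e., the first two rows of λ are preserved by the sequence of border strip removals defining τ_r. -/
/-- Two boxes share an edge. -/
def BoxAdj (a b : ℕ × ℕ) : Prop :=
  (a.1 = b.1 ∧ (a.2 + 1 = b.2 ∨ b.2 + 1 = a.2)) ∨
  (a.2 = b.2 ∧ (a.1 + 1 = b.1 ∨ b.1 + 1 = a.1))

/-- A finite set of boxes is connected (via sharing edges). -/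
def BoxConnected (R : Finset (ℕ × ℕ)) : Prop :=
  ∀ x ∈ R, ∀ y ∈ R, Relation.ReflTransGen (fun a b => b ∈ R ∧ BoxAdj a b) x y

/-- A finite set of boxes contains no 2×2 square. -/
def No2x2 (R : Finset (ℕ × ℕ)) : Prop :=
  ∀ i j : ℕ, ¬ ((i, j) ∈ R ∧ (i + 1, j) ∈ R ∧ (i, j + 1) ∈ R ∧ (i + 1, j + 1) ∈ R)

/-- A border strip: a connected skew diagram with no 2×2 square. -/
def IsBorderStrip (R : Finset (ℕ × ℕ)) : Prop := BoxConnected R ∧ No2x2 R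

/-- `R` is a border strip contained in `lam` whose removal leaves a partition
(`λ∖R` is a lower set, hence again a Young diagram). -/
def RemovableBS (R : Finset (ℕ × ℕ)) (lam : YoungDiagram) : Prop :=
  R ⊆ lam.cells ∧ IsBorderStrip R ∧ IsLowerSet (↑(lam.cells \ R) : Set (ℕ × ℕ))

/-- The partition `λ∖R` obtained by removing a removable border strip. -/
def eraseBS (lam : YoungDiagram) (R : Finset (ℕ × ℕ)) (h : RemovableBS R lam) :
    YoungDiagram := ⟨lam.cells \ R, h.2.2⟩

/-- `TauRel r λ μ t` holds iff `τ_r(λ) = μ` and `i_r(λ) = t`: if `l(λ) ≤ r/2` then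
`τ_r(λ) = λ`, `i_r(λ) = 0`; if `l(λ) > r/2` and there is a (nonempty) border strip
`R` of size `2·l(λ) - r - 2` starting at the first box of the bottom row of `λ`
with `λ∖R` a partition, then `τ_r(λ) = τ_r(λ∖R)` and `i_r(λ) = c(R) + i_r(λ∖R)`,
where `c(R)` is the number of columns of `R`; otherwise `i_r(λ) = ∞` (no relation). -/
inductive TauRel (r : ℕ) : YoungDiagram → YoungDiagram → ℕ → Prop
  | base (lam : YoungDiagram) (h : lam.colLen 0 ≤ r / 2) : TauRel r lam lam 0
  | step (lam : YoungDiagram) (R : Finset (ℕ × ℕ)) (μ : YoungDiagram) (t : ℕ)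
      (hl : r / 2 < lam.colLen 0) (hne : R.Nonempty) (hR : RemovableBS R lam)
      (hsize : R.card = 2 * lam.colLen 0 - r - 2)
      (hstart : (lam.colLen 0 - 1, 0) ∈ R)
      (hrec : TauRel r (eraseBS lam R hR) μ t) :
      TauRel r lam μ ((R.image Prod.snd).card + t)

/-- Along a path of edge-adjacent boxes inside `R`, every intermediate row index
is the row of some box of `R`. -/
lemma rows_interval {R : Finset (ℕ × ℕ)} {x y : ℕ × ℕ}
    (h : Relation.ReflTransGen (fun a b => b ∈ R ∧ BoxAdj a b) x y) (hx : x ∈ R) :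
    ∀ k, (x.1 ≤ k ∧ k ≤ y.1) ∨ (y.1 ≤ k ∧ k ≤ x.1) → ∃ p ∈ R, p.1 = k := by
  induction h with
  | refl =>
    intro k hk
    exact ⟨x, hx, by omega⟩
  | tail h' step ih =>
    rename_i b c
    obtain ⟨hc, hadj⟩ := step
    intro k hk
    by_cases hkc : k = c.1
    · exact ⟨c, hc, hkc.symm⟩
    · apply ih
      rcases hadj with ⟨h1, _⟩ | ⟨_, h1 | h1⟩ <;> omega

lemma rowLen_congr {μ ν : YoungDiagram} {i : ℕ} (h : ∀ j, (i, j) ∈ μ ↔ (i, j) ∈ ν) :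
    μ.rowLen i = ν.rowLen i := by
  have h1 := (YoungDiagram.mem_iff_lt_rowLen (μ := μ) (i := i) (j := ν.rowLen i)).symm.trans
    ((h (ν.rowLen i)).trans YoungDiagram.mem_iff_lt_rowLen)
  have h2 := (YoungDiagram.mem_iff_lt_rowLen (μ := μ) (i := i) (j := μ.rowLen i)).symm.trans
    ((h (μ.rowLen i)).trans YoungDiagram.mem_iff_lt_rowLen)
  omega

/-- In a `TauRel` step with `l(λ) ≤ r`, the border strip avoids rows `0` and `1`. -/
lemma strip_avoids_low_rows (r : ℕ) (hr : Even r) (lam : YoungDiagram)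
    (R : Finset (ℕ × ℕ)) (hl' : r / 2 < lam.colLen 0) (hl : lam.colLen 0 ≤ r)
    (hR : RemovableBS R lam) (hsize : R.card = 2 * lam.colLen 0 - r - 2)
    (hstart : (lam.colLen 0 - 1, 0) ∈ R) :
    ∀ i j : ℕ, (i, j) ∈ R → 2 ≤ i := by
  intro i j hij
  by_contra hi
  push_neg at hi
  set l := lam.colLen 0 with hldef
  obtain ⟨m, hm⟩ := hr
  have hm2 : r / 2 = m := by omega
  -- the rows i, i+1, ..., l-1 all occur in R
  have hsub : Finset.Icc i (l - 1) ⊆ R.image Prod.fst := by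
    intro k hk
    rw [Finset.mem_Icc] at hk
    obtain ⟨p, hp, hpk⟩ := rows_interval (hR.2.1.1 _ hstart _ hij) hstart k (by simp; omega)
    exact Finset.mem_image.mpr ⟨p, hp, hpk⟩
  have hcard : (Finset.Icc i (l - 1)).card ≤ R.card :=
    le_trans (Finset.card_le_card hsub) (Finset.card_image_le)
  rw [Nat.card_Icc] at hcard
  omega

/-- for even `r` and a partition `λ` with `l(λ) ≤ r` and
`i_r(λ) < ∞` (i.e. `τ_r(λ)` is defined), the first two rows of `λ` are preserved:
`τ_r(λ)₁ = λ₁` and `τ_r(λ)₂ = λ₂`. -/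
theorem stmt8 (r : ℕ) (hr : Even r) (lam μ : YoungDiagram) (t : ℕ)
    (hl : lam.colLen 0 ≤ r) (h : TauRel r lam μ t) :
    μ.rowLen 0 = lam.rowLen 0 ∧ μ.rowLen 1 = lam.rowLen 1 := by
  induction h with
  | base lam h => exact ⟨rfl, rfl⟩
  | step lam R ν t hl' hne hR hsize hstart hrec ih =>
    have havoid := strip_avoids_low_rows r hr lam R hl' hl hR hsize hstart
    have hmem : ∀ i j : ℕ, i ≤ 1 → ((i, j) ∈ eraseBS lam R hR ↔ (i, j) ∈ lam) := by
      intro i j hi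
      have : (i, j) ∉ R := fun hc => by have := havoid i j hc; omega
      simp [eraseBS, YoungDiagram.mem_cells, Finset.mem_sdiff, ← YoungDiagram.mem_cells,
        this]
    have hcol : (eraseBS lam R hR).colLen 0 ≤ lam.colLen 0 := by
      by_contra hc
      push_neg at hc
      have h1 : (lam.colLen 0, 0) ∈ eraseBS lam R hR :=
        YoungDiagram.mem_iff_lt_colLen.mpr hc
      have h2 : (lam.colLen 0, 0) ∈ lam := by
        have : (lam.colLen 0, (0:ℕ)) ∈ lam.cells \ R := h1
        exact (YoungDiagram.mem_cells _).mp (Finset.mem_sdiff.mp this).1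
      exact absurd (YoungDiagram.mem_iff_lt_colLen.mp h2) (lt_irrefl _)
    obtain ⟨ih0, ih1⟩ := ih (le_trans hcol hl)
    exact ⟨ih0.trans (rowLen_congr (fun j => hmem 0 j (by omega))),
      ih1.trans (rowLen_congr (fun j => hmem 1 j (by omega)))⟩
end

section
/- For r = 6 and a partition (a,b,c) with a ≥ b ≥ c ≥ 2, the partitions λ with l(λ) ≤ 6 and τ_6(λ) = (a,b,c) are exactly (a,b,c), (a,b,c,1,1), (a,b,c,2,1,1), (a,b,c,2,2,2), with i_6(λ) equal to 0, 1, 2, 3 respectively. -/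
/-- `λ` has row lengths given by the list `w` (padded by zeros). -/
def HasRowLens (lam : YoungDiagram) (w : List ℕ) : Prop :=
  ∀ i, lam.rowLen i = w.getD i 0

section Helpers

open Relation YoungDiagram

lemma rowLen_eq' {lam : YoungDiagram} {i v : ℕ} (h : ∀ j, (i, j) ∈ lam ↔ j < v) :
    lam.rowLen i = v := by
  rcases Nat.lt_trichotomy (lam.rowLen i) v with hlt | heq | hgt
  · exact absurd (YoungDiagram.mem_iff_lt_rowLen.mp ((h _).mpr hlt)) (lt_irrefl _)
  · exact heq
  · exact absurd ((h v).mp (YoungDiagram.mem_iff_lt_rowLen.mpr hgt)) (lt_irrefl _)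

lemma mem_eraseBS {lam : YoungDiagram} {R : Finset (ℕ × ℕ)} {h : RemovableBS R lam}
    {p : ℕ × ℕ} : p ∈ eraseBS lam R h ↔ p ∈ lam ∧ p ∉ R := by
  show p ∈ lam.cells \ R ↔ _
  simp [Finset.mem_sdiff]

lemma exists_crossing {α : Type*} {rel : α → α → Prop} {P : α → Prop} {x y : α}
    (h : Relation.ReflTransGen rel x y) (hx : P x) (hy : ¬ P y) :
    ∃ u v, rel u v ∧ P u ∧ ¬ P v := by
  induction h with
  | refl => exact absurd hx hy
  | @tail b c hxb hbc ih =>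
      by_cases hb : P b
      · exact ⟨b, c, hbc, hb, hy⟩
      · exact ih hb

lemma mem_of_path {R : Finset (ℕ × ℕ)} {x y : ℕ × ℕ}
    (h : Relation.ReflTransGen (fun a b => b ∈ R ∧ BoxAdj a b) x y) (hx : x ∈ R) : y ∈ R := by
  induction h with
  | refl => exact hx
  | tail _ h2 _ => exact h2.1

lemma exists_last {R : Finset (ℕ × ℕ)} {x y : ℕ × ℕ}
    (h : Relation.ReflTransGen (fun a b => b ∈ R ∧ BoxAdj a b) x y) (hx : x ∈ R)
    (hne : y ≠ x) : ∃ u ∈ R, BoxAdj u y := by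
  rcases Relation.ReflTransGen.cases_tail h with heq | ⟨u, h1, h2⟩
  · exact absurd heq hne
  · exact ⟨u, mem_of_path h1 hx, h2.2⟩

lemma tau_le3 {lam μ : YoungDiagram} {t : ℕ} (h : lam.colLen 0 ≤ 3)
    (ht : TauRel 6 lam μ t) : lam = μ ∧ t = 0 := by
  cases ht with
  | base => exact ⟨rfl, rfl⟩
  | step lam R μ t hl hne hR hsize hstart hrec => norm_num at hl; omega

lemma tau_ne4 {lam μ : YoungDiagram} {t : ℕ} (h : lam.colLen 0 = 4)
    (ht : TauRel 6 lam μ t) : False := by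
  cases ht with
  | base h' => omega
  | step lam R μ t hl hne hR hsize hstart hrec =>
      rw [h] at hsize
      norm_num at hsize
      rcases hne with ⟨x, hx⟩
      simp [hsize] at hx

lemma tau5 {lam μ : YoungDiagram} {t : ℕ} (h : lam.colLen 0 = 5)
    (ht : TauRel 6 lam μ t) :
    t = 1 ∧ μ.colLen 0 ≤ 3 ∧
      ∀ p : ℕ × ℕ, p ∈ lam ↔ p ∈ μ ∨ p = (3, 0) ∨ p = (4, 0) := by
  cases ht with
  | base h' => omega
  | step lam R μ t hl hne hR hsize hstart hrec =>
      have hsub := hR.1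
      have hRcard : R.card = 2 := by rw [h] at hsize; norm_num at hsize; exact hsize
      have hstart' : ((4 : ℕ), (0 : ℕ)) ∈ R := by rw [h] at hstart; exact hstart
      set ν := eraseBS lam R hR with hν
      have hν4 : ((4 : ℕ), (0 : ℕ)) ∉ ν := by
        rw [mem_eraseBS]; rintro ⟨-, hn⟩; exact hn hstart'
      have hνle : ν.colLen 0 ≤ 4 := by
        by_contra hgt
        exact hν4 (YoungDiagram.mem_iff_lt_colLen.mpr (by omega))
      have hνne4 : ν.colLen 0 ≠ 4 := fun h4 => tau_ne4 h4 hrec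
      obtain ⟨hνμ, ht0⟩ := tau_le3 (by omega) hrec
      have hμ3 : μ.colLen 0 ≤ 3 := hνμ ▸ (by omega)
      have h30 : ((3 : ℕ), (0 : ℕ)) ∈ R := by
        by_contra hn
        have hl3 : ((3 : ℕ), (0 : ℕ)) ∈ lam := YoungDiagram.mem_iff_lt_colLen.mpr (by omega)
        have : ((3 : ℕ), (0 : ℕ)) ∈ ν := mem_eraseBS.mpr ⟨hl3, hn⟩
        rw [hνμ, YoungDiagram.mem_iff_lt_colLen] at this
        omega
      have hReq : R = {(3, 0), (4, 0)} := by
        refine (Finset.eq_of_subset_of_card_le ?_ ?_).symm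
        · intro p hp
          simp only [Finset.mem_insert, Finset.mem_singleton] at hp
          rcases hp with rfl | rfl
          · exact h30
          · exact hstart'
        · rw [hRcard]; exact Nat.le_of_eq (Finset.card_pair (by decide)).symm
      refine ⟨?_, hμ3, ?_⟩
      · rw [hReq, ht0]; decide
      · intro p
        constructor
        · intro hp
          by_cases hpR : p ∈ R
          · right; rw [hReq] at hpR
            simpa using hpR
          · left; rw [← hνμ]; exact mem_eraseBS.mpr ⟨hp, hpR⟩
        · rintro (hp | hp | hp)
          · rw [← hνμ] at hp; exact (mem_eraseBS.mp hp).1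
          · exact hsub (by rw [hReq, hp]; simp)
          · exact hsub (by rw [hReq, hp]; simp)

set_option maxHeartbeats 1000000 in
lemma tau6 {lam μ : YoungDiagram} {t : ℕ} (h : lam.colLen 0 = 6)
    (hμ2 : ((2 : ℕ), (0 : ℕ)) ∈ μ) (ht : TauRel 6 lam μ t) :
    μ.colLen 0 ≤ 3 ∧
      ((t = 2 ∧ ∀ p : ℕ × ℕ, p ∈ lam ↔ p ∈ μ ∨ p ∈ ({(3, 0), (3, 1), (4, 0), (5, 0)} :
        Finset (ℕ × ℕ))) ∨
       (t = 3 ∧ ∀ p : ℕ × ℕ, p ∈ lam ↔ p ∈ μ ∨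
         p ∈ ({(3, 0), (3, 1), (4, 0), (4, 1), (5, 0), (5, 1)} : Finset (ℕ × ℕ)))) := by
  cases ht with
  | base h' => omega
  | step lam R μ t hl hne hR hsize hstart hrec =>
    have hsub := hR.1
    have hconn : BoxConnected R := hR.2.1.1
    have hRcard : R.card = 4 := by rw [h] at hsize; norm_num at hsize; exact hsize
    have hstart' : ((5 : ℕ), (0 : ℕ)) ∈ R := by rw [h] at hstart; exact hstart
    set ν := eraseBS lam R hR with hν
    have hν5 : ((5 : ℕ), (0 : ℕ)) ∉ ν := by
      rw [mem_eraseBS]; rintro ⟨-, hn⟩; exact hn hstart'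
    have hνle : ν.colLen 0 ≤ 5 := by
      by_contra hgt
      exact hν5 (YoungDiagram.mem_iff_lt_colLen.mpr (by omega))
    have hνne4 : ν.colLen 0 ≠ 4 := fun h4 => tau_ne4 h4 hrec
    have hlam_row : ∀ p : ℕ × ℕ, p ∈ lam ↔ p ∈ ν ∨ p ∈ R := by
      intro p
      constructor
      · intro hp
        by_cases hpR : p ∈ R
        · exact Or.inr hpR
        · exact Or.inl (mem_eraseBS.mpr ⟨hp, hpR⟩)
      · rintro (hp | hp)
        exacts [(mem_eraseBS.mp hp).1, hsub hp]
    by_cases h5 : ν.colLen 0 = 5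
    · -- Case B : lam = (a,b,c,2,2,2)
      obtain ⟨ht1, hμ3, hmem5⟩ := tau5 h5 hrec
      have h40ν : ((4 : ℕ), (0 : ℕ)) ∈ ν := (hmem5 _).mpr (Or.inr (Or.inr rfl))
      have h2lt : 1 < R.card := by omega
      rw [Finset.one_lt_card] at h2lt
      obtain ⟨p, hp, q, hq, hpq⟩ := h2lt
      have hy : ∃ y ∈ R, y ≠ ((5 : ℕ), (0 : ℕ)) := by
        by_cases hp5 : p = ((5 : ℕ), (0 : ℕ))
        · exact ⟨q, hq, fun h' => hpq (hp5.trans h'.symm)⟩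
        · exact ⟨p, hp, hp5⟩
      obtain ⟨y, hyR, hy5⟩ := hy
      obtain ⟨u, huR, hadj⟩ := exists_last (hconn y hyR _ hstart') hyR (fun he => hy5 he.symm)
      obtain ⟨ua, ub⟩ := u
      have h51R : ((5 : ℕ), (1 : ℕ)) ∈ R := by
        simp only [BoxAdj] at hadj
        have hcases : (ua = 5 ∧ ub = 1) ∨ (ub = 0 ∧ ua = 4) ∨ (ub = 0 ∧ ua = 6) := by
          rcases hadj with ⟨h1, h2 | h2⟩ | ⟨h1, h2 | h2⟩ <;> omega
        rcases hcases with ⟨h1, h2⟩ | ⟨h1, h2⟩ | ⟨h1, h2⟩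
        · subst h1; subst h2; exact huR
        · exfalso; subst h1; subst h2
          exact (mem_eraseBS.mp h40ν).2 huR
        · exfalso; subst h1; subst h2
          have : ((6 : ℕ), (0 : ℕ)) ∈ lam := hsub huR
          rw [YoungDiagram.mem_iff_lt_colLen] at this; omega
      have h51lam : ((5 : ℕ), (1 : ℕ)) ∈ lam := hsub h51R
      have h41lam : ((4 : ℕ), (1 : ℕ)) ∈ lam := lam.up_left_mem (by norm_num) le_rfl h51lam
      have h31lam : ((3 : ℕ), (1 : ℕ)) ∈ lam := lam.up_left_mem (by norm_num) le_rfl h51lam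
      have hnotν : ∀ i : ℕ, 3 ≤ i → ((i : ℕ), (1 : ℕ)) ∉ ν := by
        intro i hi hmem
        rcases (hmem5 _).mp hmem with hm | hm | hm
        · have : ((i : ℕ), (0 : ℕ)) ∈ μ := μ.up_left_mem le_rfl (Nat.zero_le _) hm
          rw [YoungDiagram.mem_iff_lt_colLen] at this; omega
        · simp [Prod.ext_iff] at hm
        · simp [Prod.ext_iff] at hm
      have h41R : ((4 : ℕ), (1 : ℕ)) ∈ R := by
        rcases (hlam_row _).mp h41lam with hm | hm
        · exact absurd hm (hnotν 4 (by norm_num))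
        · exact hm
      have h31R : ((3 : ℕ), (1 : ℕ)) ∈ R := by
        rcases (hlam_row _).mp h31lam with hm | hm
        · exact absurd hm (hnotν 3 le_rfl)
        · exact hm
      have hReq : R = {(3, 1), (4, 1), (5, 0), (5, 1)} := by
        refine (Finset.eq_of_subset_of_card_le ?_ ?_).symm
        · intro x hx
          simp only [Finset.mem_insert, Finset.mem_singleton] at hx
          rcases hx with rfl | rfl | rfl | rfl
          exacts [h31R, h41R, hstart', h51R]
        · rw [hRcard]; decide
      refine ⟨hμ3, Or.inr ⟨?_, ?_⟩⟩
      · rw [hReq, ht1]; decide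
      · intro x
        rw [hlam_row x, hmem5 x, hReq]
        simp only [Finset.mem_insert, Finset.mem_singleton]
        constructor
        · rintro ((h' | h' | h') | (h' | h' | h' | h'))
          · exact Or.inl h'
          · exact Or.inr (Or.inl h')
          · exact Or.inr (Or.inr (Or.inr (Or.inl h')))
          · exact Or.inr (Or.inr (Or.inl h'))
          · exact Or.inr (Or.inr (Or.inr (Or.inr (Or.inl h'))))
          · exact Or.inr (Or.inr (Or.inr (Or.inr (Or.inr (Or.inl h')))))
          · exact Or.inr (Or.inr (Or.inr (Or.inr (Or.inr (Or.inr h')))))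
        · rintro (h' | h' | h' | h' | h' | h' | h')
          · exact Or.inl (Or.inl h')
          · exact Or.inl (Or.inr (Or.inl h'))
          · exact Or.inr (Or.inl h')
          · exact Or.inl (Or.inr (Or.inr h'))
          · exact Or.inr (Or.inr (Or.inl h'))
          · exact Or.inr (Or.inr (Or.inr (Or.inl h')))
          · exact Or.inr (Or.inr (Or.inr (Or.inr h')))
    · -- Case A : lam = (a,b,c,2,1,1)
      have hν3 : ν.colLen 0 ≤ 3 := by omega
      obtain ⟨hνμ, ht0⟩ := tau_le3 hν3 hrec
      have hμ3 : μ.colLen 0 ≤ 3 := hνμ ▸ hν3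
      have hRiff : ∀ p : ℕ × ℕ, p ∈ R ↔ p ∈ lam ∧ p ∉ μ := by
        intro p
        constructor
        · intro hp
          refine ⟨hsub hp, fun hμp => ?_⟩
          rw [← hνμ] at hμp
          exact (mem_eraseBS.mp hμp).2 hp
        · rintro ⟨hpl, hpμ⟩
          by_contra hn
          exact hpμ (hνμ ▸ mem_eraseBS.mpr ⟨hpl, hn⟩)
      have hnotμ : ∀ i j : ℕ, 3 ≤ i → ((i : ℕ), (j : ℕ)) ∉ μ := by
        intro i j hi hm
        have : ((i : ℕ), (0 : ℕ)) ∈ μ := μ.up_left_mem le_rfl (Nat.zero_le _) hm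
        rw [YoungDiagram.mem_iff_lt_colLen] at this; omega
      have h30R : ((3 : ℕ), (0 : ℕ)) ∈ R :=
        (hRiff _).mpr ⟨YoungDiagram.mem_iff_lt_colLen.mpr (by omega), hnotμ 3 0 le_rfl⟩
      have h40R : ((4 : ℕ), (0 : ℕ)) ∈ R :=
        (hRiff _).mpr ⟨YoungDiagram.mem_iff_lt_colLen.mpr (by omega), hnotμ 4 0 (by norm_num)⟩
      have hrows : ∀ p ∈ R, 3 ≤ p.1 := by
        intro p hpR
        by_contra hlt
        push_neg at hlt
        obtain ⟨u, v, ⟨hvR, hadj⟩, ⟨huR, hu2⟩, hnv⟩ :=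
          exists_crossing (P := fun q => q ∈ R ∧ q.1 ≤ 2) (hconn p hpR _ hstart')
            ⟨hpR, by omega⟩ (by rintro ⟨-, h5'⟩; norm_num at h5')
        have hv3 : 3 ≤ v.1 := by
          by_contra hv
          push_neg at hv
          exact hnv ⟨hvR, by omega⟩
        obtain ⟨ua, ub⟩ := u
        obtain ⟨va, vb⟩ := v
        simp only [BoxAdj] at hadj
        simp only at hu2 hv3
        have hcomp : va = 3 ∧ ua = 2 ∧ vb = ub := by
          rcases hadj with ⟨h1, h2 | h2⟩ | ⟨h1, h2 | h2⟩ <;> omega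
        obtain ⟨hva, hua, hvb⟩ := hcomp
        rw [hua] at huR
        rw [hva, hvb] at hvR
        have hk0 : ub ≠ 0 := by
          intro h0
          rw [h0] at huR
          exact ((hRiff _).mp huR).2 hμ2
        have hsubset : ({(2, ub), (3, ub), (3, 0), (4, 0), (5, 0)} : Finset (ℕ × ℕ)) ⊆ R := by
          intro x hx
          simp only [Finset.mem_insert, Finset.mem_singleton] at hx
          rcases hx with rfl | rfl | rfl | rfl | rfl
          exacts [huR, hvR, h30R, h40R, hstart']
        have hcard5 : ({(2, ub), (3, ub), (3, 0), (4, 0), (5, 0)} : Finset (ℕ × ℕ)).card = 5 := by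
          rw [Finset.card_insert_of_notMem (by simp [Prod.ext_iff]),
              Finset.card_insert_of_notMem (by simp [Prod.ext_iff]; omega)]
          decide
        have := Finset.card_le_card hsubset
        omega
      have hS : ({(3, 0), (4, 0), (5, 0)} : Finset (ℕ × ℕ)) ⊆ R := by
        intro x hx
        simp only [Finset.mem_insert, Finset.mem_singleton] at hx
        rcases hx with rfl | rfl | rfl
        exacts [h30R, h40R, hstart']
      have hex : ∃ x, x ∈ R ∧ x ∉ ({(3, 0), (4, 0), (5, 0)} : Finset (ℕ × ℕ)) := by
        by_contra hno
        push_neg at hno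
        have hsub' : R ⊆ ({(3, 0), (4, 0), (5, 0)} : Finset (ℕ × ℕ)) := fun x hx => hno x hx
        have := Finset.card_le_card hsub'
        have h3 : ({(3, 0), (4, 0), (5, 0)} : Finset (ℕ × ℕ)).card = 3 := by decide
        omega
      obtain ⟨⟨xa, xb⟩, hxR, hxS⟩ := hex
      have hReq : R = insert (xa, xb) {(3, 0), (4, 0), (5, 0)} := by
        refine (Finset.eq_of_subset_of_card_le ?_ ?_).symm
        · intro x hx
          rcases Finset.mem_insert.mp hx with rfl | hx
          exacts [hxR, hS hx]
        · rw [hRcard, Finset.card_insert_of_notMem hxS]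
          decide
      have hxa3 : 3 ≤ xa := hrows _ hxR
      have hxb1 : 1 ≤ xb := by
        rcases Nat.eq_zero_or_pos xb with h0 | h'
        · exfalso
          subst h0
          have hxa5 : xa ≤ 5 := by
            have : ((xa : ℕ), (0 : ℕ)) ∈ lam := hsub hxR
            rw [YoungDiagram.mem_iff_lt_colLen] at this; omega
          exact hxS (by simp [Prod.ext_iff]; omega)
        · exact h'
      have h31lam : ((3 : ℕ), (1 : ℕ)) ∈ lam := lam.up_left_mem hxa3 hxb1 (hsub hxR)
      have h31R : ((3 : ℕ), (1 : ℕ)) ∈ R := (hRiff _).mpr ⟨h31lam, hnotμ 3 1 le_rfl⟩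
      have hx31 : ((xa : ℕ), (xb : ℕ)) = ((3 : ℕ), (1 : ℕ)) := by
        rw [hReq] at h31R
        rcases Finset.mem_insert.mp h31R with he | he
        · exact he.symm
        · exfalso; simp [Prod.ext_iff] at he
      refine ⟨hμ3, Or.inl ⟨?_, ?_⟩⟩
      · rw [hReq, hx31, ht0]; decide
      · intro x
        rw [hlam_row x, hνμ, hReq, hx31]
        simp only [Finset.mem_insert, Finset.mem_singleton]
        constructor <;> rintro (h' | h' | h' | h' | h') <;>
          first
            | exact Or.inl h'
            | exact Or.inr (Or.inr (Or.inr (Or.inr h')))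
            | exact Or.inr (Or.inr (Or.inr (Or.inl h')))
            | (first
                | exact Or.inr (Or.inr (Or.inl h'))
                | exact Or.inr (Or.inl h'))

lemma colLen_eq_succ {μ : YoungDiagram} {n : ℕ} (h2 : ((n : ℕ), (0 : ℕ)) ∈ μ)
    (h1 : ((n + 1 : ℕ), (0 : ℕ)) ∉ μ) : μ.colLen 0 = n + 1 := by
  have a := YoungDiagram.mem_iff_lt_colLen.mp h2
  have b : ¬(n + 1 < μ.colLen 0) := fun hh => h1 (YoungDiagram.mem_iff_lt_colLen.mpr hh)
  omega

lemma isLowerSet_of_char {s : Finset (ℕ × ℕ)} {w : List ℕ}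
    (hmono : ∀ i, w.getD (i + 1) 0 ≤ w.getD i 0)
    (h : ∀ i j, ((i, j) ∈ s ↔ j < w.getD i 0)) : IsLowerSet (↑s : Set (ℕ × ℕ)) := by
  have hmono' : ∀ i' i : ℕ, i' ≤ i → w.getD i 0 ≤ w.getD i' 0 := by
    intro i' i h'
    induction h' with
    | refl => exact le_rfl
    | step _ ih => exact le_trans (hmono _) ih
  rintro ⟨i, j⟩ ⟨i', j'⟩ ⟨hi, hj⟩ hmem
  simp only [Finset.coe_sort_coe, Set.mem_setOf_eq, Finset.mem_coe] at hmem ⊢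
  rw [h] at hmem ⊢
  have := hmono' i' i hi
  simp only at hi hj
  omega

lemma mem_of_hasRowLens {lam : YoungDiagram} {w : List ℕ} (h : HasRowLens lam w) :
    ∀ i j : ℕ, ((i, j) ∈ lam ↔ j < w.getD i 0) := fun i j => by
  rw [YoungDiagram.mem_iff_lt_rowLen, h i]

lemma boxAdj_symm {x y : ℕ × ℕ} (h : BoxAdj x y) : BoxAdj y x := by
  unfold BoxAdj at *; tauto

/-- Construction for `(a,b,c,1,1)`. -/
lemma build1 {a b c : ℕ} (hab : b ≤ a) (hbc : c ≤ b) (hc : 2 ≤ c)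
    {lam μ : YoungDiagram} (hμ : HasRowLens μ [a, b, c])
    (hlam : HasRowLens lam [a, b, c, 1, 1]) : TauRel 6 lam μ 1 := by
  have hμmem := mem_of_hasRowLens hμ
  have hlmem := mem_of_hasRowLens hlam
  have hcol : lam.colLen 0 = 5 :=
    colLen_eq_succ ((hlmem 4 0).mpr Nat.one_pos)
      (by rw [hlmem]; simp [List.getD_cons_zero, List.getD_cons_succ])
  have hμcol : μ.colLen 0 = 3 :=
    colLen_eq_succ ((hμmem 2 0).mpr (show 0 < c by omega))
      (by rw [hμmem]; simp [List.getD_cons_zero, List.getD_cons_succ])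
  set R : Finset (ℕ × ℕ) := {(3, 0), (4, 0)} with hRdef
  have hsub : R ⊆ lam.cells := by
    intro p hp
    simp only [hRdef, Finset.mem_insert, Finset.mem_singleton] at hp
    rcases hp with rfl | rfl
    · exact (hlmem 3 0).mpr Nat.one_pos
    · exact (hlmem 4 0).mpr Nat.one_pos
  have hchar : ∀ i j : ℕ, ((i, j) ∈ lam.cells \ R ↔ j < [a, b, c].getD i 0) := by
    intro i j
    rw [Finset.mem_sdiff, YoungDiagram.mem_cells, hlmem]
    simp only [hRdef, Finset.mem_insert, Finset.mem_singleton, Prod.ext_iff]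
    rcases i with _ | _ | _ | _ | _ | i <;>
      simp [List.getD_cons_zero, List.getD_cons_succ] <;> omega
  have hlow : IsLowerSet (↑(lam.cells \ R) : Set (ℕ × ℕ)) := by
    refine isLowerSet_of_char (w := [a, b, c]) ?_ hchar
    intro i
    rcases i with _ | _ | _ | i <;>
      simp [List.getD_cons_zero, List.getD_cons_succ] <;> omega
  have hconn : BoxConnected R := by
    intro x hx y hy
    simp only [hRdef, Finset.mem_insert, Finset.mem_singleton] at hx hy
    have m3 : ((3 : ℕ), (0 : ℕ)) ∈ R := by simp [hRdef]
    have m4 : ((4 : ℕ), (0 : ℕ)) ∈ R := by simp [hRdef]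
    rcases hx with rfl | rfl <;> rcases hy with rfl | rfl
    · exact Relation.ReflTransGen.refl
    · exact Relation.ReflTransGen.single ⟨m4, by simp [BoxAdj]⟩
    · exact Relation.ReflTransGen.single ⟨m3, by simp [BoxAdj]⟩
    · exact Relation.ReflTransGen.refl
  have hno : No2x2 R := by
    rintro i j ⟨h1, h2, h3, h4⟩
    simp only [hRdef, Finset.mem_insert, Finset.mem_singleton, Prod.ext_iff] at h1 h2 h3 h4
    omega
  have hRem : RemovableBS R lam := ⟨hsub, ⟨hconn, hno⟩, hlow⟩
  have herase : eraseBS lam R hRem = μ := by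
    apply YoungDiagram.ext
    ext ⟨i, j⟩
    rw [show (eraseBS lam R hRem).cells = lam.cells \ R from rfl, hchar i j,
      YoungDiagram.mem_cells, hμmem]
  have hstep := TauRel.step (r := 6) lam R μ 0 (by rw [hcol]; norm_num) ⟨(3, 0), by simp [hRdef]⟩ hRem
    (by rw [hcol, hRdef]; decide)
    (by rw [hcol]; simp [hRdef])
    (by rw [herase]; exact TauRel.base μ (by rw [hμcol]))
  rwa [show (R.image Prod.snd).card + 0 = 1 from by rw [hRdef]; decide] at hstep

/-- Construction for `(a,b,c,2,1,1)`. -/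
lemma build2 {a b c : ℕ} (hab : b ≤ a) (hbc : c ≤ b) (hc : 2 ≤ c)
    {lam μ : YoungDiagram} (hμ : HasRowLens μ [a, b, c])
    (hlam : HasRowLens lam [a, b, c, 2, 1, 1]) : TauRel 6 lam μ 2 := by
  have hμmem := mem_of_hasRowLens hμ
  have hlmem := mem_of_hasRowLens hlam
  have hcol : lam.colLen 0 = 6 :=
    colLen_eq_succ ((hlmem 5 0).mpr Nat.one_pos)
      (by rw [hlmem]; simp [List.getD_cons_zero, List.getD_cons_succ])
  have hμcol : μ.colLen 0 = 3 :=
    colLen_eq_succ ((hμmem 2 0).mpr (show 0 < c by omega))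
      (by rw [hμmem]; simp [List.getD_cons_zero, List.getD_cons_succ])
  set R : Finset (ℕ × ℕ) := {(3, 0), (3, 1), (4, 0), (5, 0)} with hRdef
  have hsub : R ⊆ lam.cells := by
    intro p hp
    simp only [hRdef, Finset.mem_insert, Finset.mem_singleton] at hp
    rcases hp with rfl | rfl | rfl | rfl
    · exact (hlmem 3 0).mpr Nat.zero_lt_two
    · exact (hlmem 3 1).mpr Nat.one_lt_two
    · exact (hlmem 4 0).mpr Nat.one_pos
    · exact (hlmem 5 0).mpr Nat.one_pos
  have hchar : ∀ i j : ℕ, ((i, j) ∈ lam.cells \ R ↔ j < [a, b, c].getD i 0) := by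
    intro i j
    rw [Finset.mem_sdiff, YoungDiagram.mem_cells, hlmem]
    simp only [hRdef, Finset.mem_insert, Finset.mem_singleton, Prod.ext_iff]
    rcases i with _ | _ | _ | _ | _ | _ | i <;>
      simp [List.getD_cons_zero, List.getD_cons_succ] <;> omega
  have hlow : IsLowerSet (↑(lam.cells \ R) : Set (ℕ × ℕ)) := by
    refine isLowerSet_of_char (w := [a, b, c]) ?_ hchar
    intro i
    rcases i with _ | _ | _ | i <;>
      simp [List.getD_cons_zero, List.getD_cons_succ] <;> omega
  have hconn : BoxConnected R := by
    have m30 : ((3 : ℕ), (0 : ℕ)) ∈ R := by simp [hRdef]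
    have m31 : ((3 : ℕ), (1 : ℕ)) ∈ R := by simp [hRdef]
    have m40 : ((4 : ℕ), (0 : ℕ)) ∈ R := by simp [hRdef]
    have m50 : ((5 : ℕ), (0 : ℕ)) ∈ R := by simp [hRdef]
    set rel := fun a b : ℕ × ℕ => b ∈ R ∧ BoxAdj a b with hrel
    have toHub : ∀ x ∈ R, Relation.ReflTransGen rel x (3, 0) := by
      intro x hx
      simp only [hRdef, Finset.mem_insert, Finset.mem_singleton] at hx
      rcases hx with rfl | rfl | rfl | rfl
      · exact Relation.ReflTransGen.refl
      · exact Relation.ReflTransGen.single ⟨m30, by simp [BoxAdj]⟩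
      · exact Relation.ReflTransGen.single ⟨m30, by simp [BoxAdj]⟩
      · exact Relation.ReflTransGen.head (b := ((4 : ℕ), (0 : ℕ)))
          ⟨m40, by simp [BoxAdj]⟩ (Relation.ReflTransGen.single ⟨m30, by simp [BoxAdj]⟩)
    have fromHub : ∀ x ∈ R, Relation.ReflTransGen rel (3, 0) x := by
      intro x hx
      simp only [hRdef, Finset.mem_insert, Finset.mem_singleton] at hx
      rcases hx with rfl | rfl | rfl | rfl
      · exact Relation.ReflTransGen.refl
      · exact Relation.ReflTransGen.single ⟨m31, by simp [BoxAdj]⟩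
      · exact Relation.ReflTransGen.single ⟨m40, by simp [BoxAdj]⟩
      · exact Relation.ReflTransGen.head (b := ((4 : ℕ), (0 : ℕ)))
          ⟨m40, by simp [BoxAdj]⟩ (Relation.ReflTransGen.single ⟨m50, by simp [BoxAdj]⟩)
    intro x hx y hy
    exact (toHub x hx).trans (fromHub y hy)
  have hno : No2x2 R := by
    rintro i j ⟨h1, h2, h3, h4⟩
    simp only [hRdef, Finset.mem_insert, Finset.mem_singleton, Prod.ext_iff] at h1 h2 h3 h4
    omega
  have hRem : RemovableBS R lam := ⟨hsub, ⟨hconn, hno⟩, hlow⟩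
  have herase : eraseBS lam R hRem = μ := by
    apply YoungDiagram.ext
    ext ⟨i, j⟩
    rw [show (eraseBS lam R hRem).cells = lam.cells \ R from rfl, hchar i j,
      YoungDiagram.mem_cells, hμmem]
  have hstep := TauRel.step (r := 6) lam R μ 0 (by rw [hcol]; norm_num) ⟨(3, 0), by simp [hRdef]⟩ hRem
    (by rw [hcol, hRdef]; decide)
    (by rw [hcol]; simp [hRdef])
    (by rw [herase]; exact TauRel.base μ (by rw [hμcol]))
  rwa [show (R.image Prod.snd).card + 0 = 2 from by rw [hRdef]; decide] at hstep

/-- Construction for `(a,b,c,2,2,2)`. -/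
lemma build3 {a b c : ℕ} (hab : b ≤ a) (hbc : c ≤ b) (hc : 2 ≤ c)
    {lam μ : YoungDiagram} (hμ : HasRowLens μ [a, b, c])
    (hlam : HasRowLens lam [a, b, c, 2, 2, 2]) : TauRel 6 lam μ 3 := by
  have hμmem := mem_of_hasRowLens hμ
  have hlmem := mem_of_hasRowLens hlam
  have hcol : lam.colLen 0 = 6 :=
    colLen_eq_succ ((hlmem 5 0).mpr Nat.zero_lt_two)
      (by rw [hlmem]; simp [List.getD_cons_zero, List.getD_cons_succ])
  set R : Finset (ℕ × ℕ) := {(3, 1), (4, 1), (5, 0), (5, 1)} with hRdef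
  have hsub : R ⊆ lam.cells := by
    intro p hp
    simp only [hRdef, Finset.mem_insert, Finset.mem_singleton] at hp
    rcases hp with rfl | rfl | rfl | rfl
    · exact (hlmem 3 1).mpr Nat.one_lt_two
    · exact (hlmem 4 1).mpr Nat.one_lt_two
    · exact (hlmem 5 0).mpr Nat.zero_lt_two
    · exact (hlmem 5 1).mpr Nat.one_lt_two
  have hchar : ∀ i j : ℕ, ((i, j) ∈ lam.cells \ R ↔ j < [a, b, c, 1, 1].getD i 0) := by
    intro i j
    rw [Finset.mem_sdiff, YoungDiagram.mem_cells, hlmem]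
    simp only [hRdef, Finset.mem_insert, Finset.mem_singleton, Prod.ext_iff]
    rcases i with _ | _ | _ | _ | _ | _ | i <;>
      simp [List.getD_cons_zero, List.getD_cons_succ] <;> omega
  have hlow : IsLowerSet (↑(lam.cells \ R) : Set (ℕ × ℕ)) := by
    refine isLowerSet_of_char (w := [a, b, c, 1, 1]) ?_ hchar
    intro i
    rcases i with _ | _ | _ | _ | _ | i <;>
      simp [List.getD_cons_zero, List.getD_cons_succ] <;> omega
  have hconn : BoxConnected R := by
    have m31 : ((3 : ℕ), (1 : ℕ)) ∈ R := by simp [hRdef]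
    have m41 : ((4 : ℕ), (1 : ℕ)) ∈ R := by simp [hRdef]
    have m50 : ((5 : ℕ), (0 : ℕ)) ∈ R := by simp [hRdef]
    have m51 : ((5 : ℕ), (1 : ℕ)) ∈ R := by simp [hRdef]
    set rel := fun a b : ℕ × ℕ => b ∈ R ∧ BoxAdj a b with hrel
    have toHub : ∀ x ∈ R, Relation.ReflTransGen rel x (4, 1) := by
      intro x hx
      simp only [hRdef, Finset.mem_insert, Finset.mem_singleton] at hx
      rcases hx with rfl | rfl | rfl | rfl
      · exact Relation.ReflTransGen.single ⟨m41, by simp [BoxAdj]⟩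
      · exact Relation.ReflTransGen.refl
      · exact Relation.ReflTransGen.head (b := ((5 : ℕ), (1 : ℕ)))
          ⟨m51, by simp [BoxAdj]⟩ (Relation.ReflTransGen.single ⟨m41, by simp [BoxAdj]⟩)
      · exact Relation.ReflTransGen.single ⟨m41, by simp [BoxAdj]⟩
    have fromHub : ∀ x ∈ R, Relation.ReflTransGen rel (4, 1) x := by
      intro x hx
      simp only [hRdef, Finset.mem_insert, Finset.mem_singleton] at hx
      rcases hx with rfl | rfl | rfl | rfl
      · exact Relation.ReflTransGen.single ⟨m31, by simp [BoxAdj]⟩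
      · exact Relation.ReflTransGen.refl
      · exact Relation.ReflTransGen.head (b := ((5 : ℕ), (1 : ℕ)))
          ⟨m51, by simp [BoxAdj]⟩ (Relation.ReflTransGen.single ⟨m50, by simp [BoxAdj]⟩)
      · exact Relation.ReflTransGen.single ⟨m51, by simp [BoxAdj]⟩
    intro x hx y hy
    exact (toHub x hx).trans (fromHub y hy)
  have hno : No2x2 R := by
    rintro i j ⟨h1, h2, h3, h4⟩
    simp only [hRdef, Finset.mem_insert, Finset.mem_singleton, Prod.ext_iff] at h1 h2 h3 h4
    omega
  have hRem : RemovableBS R lam := ⟨hsub, ⟨hconn, hno⟩, hlow⟩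
  have hν : HasRowLens (eraseBS lam R hRem) [a, b, c, 1, 1] := by
    intro i
    apply rowLen_eq'
    intro j
    rw [← YoungDiagram.mem_cells]
    exact hchar i j
  have hstep := TauRel.step (r := 6) lam R μ 1 (by rw [hcol]; norm_num) ⟨(5, 0), by simp [hRdef]⟩ hRem
    (by rw [hcol, hRdef]; decide)
    (by rw [hcol]; simp [hRdef])
    (build1 hab hbc hc hμ hν)
  rwa [show (R.image Prod.snd).card + 1 = 3 from by rw [hRdef]; decide] at hstep

end Helpers

/-- for `r = 6` and a partition `(a,b,c)` with `a ≥ b ≥ c ≥ 2`, the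
partitions `λ` with `l(λ) ≤ 6` and `τ₆(λ) = (a,b,c)` are exactly `(a,b,c)`,
`(a,b,c,1,1)`, `(a,b,c,2,1,1)`, `(a,b,c,2,2,2)`, with `i₆(λ)` equal to
`0, 1, 2, 3` respectively. -/
theorem stmt17 (a b c : ℕ) (hab : b ≤ a) (hbc : c ≤ b) (hc : 2 ≤ c) :
    (∀ (lam μ : YoungDiagram) (t : ℕ), lam.colLen 0 ≤ 6 → TauRel 6 lam μ t →
      HasRowLens μ [a, b, c] →
      ((t = 0 ∧ HasRowLens lam [a, b, c]) ∨
       (t = 1 ∧ HasRowLens lam [a, b, c, 1, 1]) ∨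
       (t = 2 ∧ HasRowLens lam [a, b, c, 2, 1, 1]) ∨
       (t = 3 ∧ HasRowLens lam [a, b, c, 2, 2, 2]))) ∧
    (∀ lam : YoungDiagram, HasRowLens lam [a, b, c] → TauRel 6 lam lam 0) ∧
    (∀ lam μ : YoungDiagram, HasRowLens μ [a, b, c] →
      ((HasRowLens lam [a, b, c, 1, 1] → TauRel 6 lam μ 1) ∧
       (HasRowLens lam [a, b, c, 2, 1, 1] → TauRel 6 lam μ 2) ∧
       (HasRowLens lam [a, b, c, 2, 2, 2] → TauRel 6 lam μ 3))) := by
  refine ⟨?_, ?_, ?_⟩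
  · -- part 1: classification
    intro lam μ t hcol ht hμ
    have hμmem := mem_of_hasRowLens hμ
    have h20 : ((2 : ℕ), (0 : ℕ)) ∈ μ := (hμmem 2 0).mpr (show 0 < c by omega)
    by_cases hA : lam.colLen 0 ≤ 3
    · obtain ⟨rfl, rfl⟩ := tau_le3 hA ht
      exact Or.inl ⟨rfl, hμ⟩
    · by_cases hB : lam.colLen 0 = 4
      · exact (tau_ne4 hB ht).elim
      · by_cases hC : lam.colLen 0 = 5
        · obtain ⟨ht1, hμ3, hmm⟩ := tau5 hC ht
          refine Or.inr (Or.inl ⟨ht1, fun i => rowLen_eq' fun j => ?_⟩)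
          rw [hmm (i, j)]
          rcases i with _ | _ | _ | _ | _ | i <;>
            simp [hμmem, Prod.ext_iff, List.getD_cons_zero, List.getD_cons_succ] <;> omega
        · have hD : lam.colLen 0 = 6 := by omega
          obtain ⟨hμ3, hcase⟩ := tau6 hD h20 ht
          rcases hcase with ⟨ht2, hmm⟩ | ⟨ht3, hmm⟩
          · refine Or.inr (Or.inr (Or.inl ⟨ht2, fun i => rowLen_eq' fun j => ?_⟩))
            rw [hmm (i, j)]
            simp only [Finset.mem_insert, Finset.mem_singleton]
            rcases i with _ | _ | _ | _ | _ | _ | i <;>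
              simp [hμmem, Prod.ext_iff, List.getD_cons_zero, List.getD_cons_succ] <;> omega
          · refine Or.inr (Or.inr (Or.inr ⟨ht3, fun i => rowLen_eq' fun j => ?_⟩))
            rw [hmm (i, j)]
            simp only [Finset.mem_insert, Finset.mem_singleton]
            rcases i with _ | _ | _ | _ | _ | _ | i <;>
              simp [hμmem, Prod.ext_iff, List.getD_cons_zero, List.getD_cons_succ] <;> omega
  · -- part 2: the identity case
    intro lam hlam
    have hlmem := mem_of_hasRowLens hlam
    have hcol : lam.colLen 0 = 3 :=
      colLen_eq_succ ((hlmem 2 0).mpr (show 0 < c by omega))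
        (by rw [hlmem]; simp [List.getD_cons_zero, List.getD_cons_succ])
    exact TauRel.base lam (by rw [hcol])
  · -- part 3: the constructions
    intro lam μ hμ
    exact ⟨build1 hab hbc hc hμ, build2 hab hbc hc hμ, build3 hab hbc hc hμ⟩
end
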